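/- arXiv:1705.03245 — 6 statements merged into one kernel-verified Lean document; each statement's English description precedes it below -/
import Mathlib

section
/- Let m ≥ 1 and let δ_1 ≥ δ_2 ≥ ... ≥ δ_m > 0 be real numbers with partial sums S_x = δ_1 + ... + δ_x and uniformity λ = max_{1 ≤ x ≤ m} (S_m − S_x)/δ_x. Let β_1, ..., β_m be nonnegative reals and let L be a real number with Σ_{x=1}^{m−1} β_x · δ_x ≤ L. Set C = Σ_{x=1}^{m} β_x · S_x. Then Σ_{x=1}^{m} β_x ≤ (C + λ·L)/S_m. -/
/-- Algebraic core of the response-time bound for a DAG task under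
work-conserving scheduling on uniform multiprocessors (Theorem 1). -/
theorem stmt_0 (m : ℕ) (hm : 1 ≤ m) (δ : ℕ → ℝ)
    (hpos : ∀ x, 1 ≤ x → x ≤ m → 0 < δ x)
    (hmono : ∀ x, 1 ≤ x → x < m → δ (x + 1) ≤ δ x)
    (S : ℕ → ℝ) (hS : ∀ x, S x = ∑ j ∈ Finset.Icc 1 x, δ j)
    (lam : ℝ)
    (hlam : lam = (Finset.Icc 1 m).sup' (Finset.nonempty_Icc.mpr hm)
      (fun x => (S m - S x) / δ x))
    (β : ℕ → ℝ) (hβ : ∀ x, 1 ≤ x → x ≤ m → 0 ≤ β x)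
    (L : ℝ) (hL : ∑ x ∈ Finset.Icc 1 (m - 1), β x * δ x ≤ L)
    (C : ℝ) (hC : C = ∑ x ∈ Finset.Icc 1 m, β x * S x) :
    ∑ x ∈ Finset.Icc 1 m, β x ≤ (C + lam * L) / S m := by
  have hSm : 0 < S m := by
    rw [hS]
    apply Finset.sum_pos
    · intro j hj
      rw [Finset.mem_Icc] at hj
      exact hpos j hj.1 hj.2
    · exact Finset.nonempty_Icc.mpr hm
  have hmem : m ∈ Finset.Icc 1 m := Finset.mem_Icc.mpr ⟨hm, le_refl m⟩
  have hlam0 : 0 ≤ lam := by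
    have := Finset.le_sup' (fun x => (S m - S x) / δ x) hmem
    rw [← hlam] at this
    simpa using this
  have hkey : ∀ x, 1 ≤ x → x ≤ m → S m - S x ≤ lam * δ x := by
    intro x h1 h2
    have hx : (S m - S x) / δ x ≤ lam := by
      rw [hlam]
      exact Finset.le_sup' (fun x => (S m - S x) / δ x) (Finset.mem_Icc.mpr ⟨h1, h2⟩)
    exact (div_le_iff₀ (hpos x h1 h2)).mp hx
  rw [le_div_iff₀ hSm]
  have hsplit : (∑ x ∈ Finset.Icc 1 m, β x) * S m
      = C + ∑ x ∈ Finset.Icc 1 m, β x * (S m - S x) := by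
    rw [hC, Finset.sum_mul, ← Finset.sum_add_distrib]
    apply Finset.sum_congr rfl
    intro x _
    ring
  rw [hsplit]
  have hstep : ∑ x ∈ Finset.Icc 1 m, β x * (S m - S x)
      = ∑ x ∈ Finset.Icc 1 (m - 1), β x * (S m - S x) := by
    have hm' : m = (m - 1) + 1 := (Nat.succ_pred_eq_of_pos hm).symm
    rw [hm', Finset.sum_Icc_succ_top (by omega : 1 ≤ m - 1 + 1)]
    rw [← hm']
    simp
  rw [hstep]
  gcongr
  calc ∑ x ∈ Finset.Icc 1 (m - 1), β x * (S m - S x)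
      ≤ ∑ x ∈ Finset.Icc 1 (m - 1), lam * (β x * δ x) := by
        apply Finset.sum_le_sum
        intro x hx
        rw [Finset.mem_Icc] at hx
        have h2 : x ≤ m := by omega
        have := hkey x hx.1 h2
        have hb := hβ x hx.1 h2
        calc β x * (S m - S x) ≤ β x * (lam * δ x) := by
              exact mul_le_mul_of_nonneg_left this hb
          _ = lam * (β x * δ x) := by ring
    _ = lam * ∑ x ∈ Finset.Icc 1 (m - 1), β x * δ x := by
        rw [Finset.mul_sum]
    _ ≤ lam * L := mul_le_mul_of_nonneg_left hL hlam0
end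

section
/- Let m ≥ 1 and let δ_1 ≥ δ_2 ≥ ... ≥ δ_m > 0 be real numbers with δ_1 ≤ 1. Let S_x = δ_1 + ... + δ_x and λ = max_{1 ≤ x ≤ m} (S_m − S_x)/δ_x. Let C, L, D be real numbers with 0 ≤ L < D. If (C + λ·L)/S_m ≤ D, then S_m ≥ (C − L)/(D − L). -/
/-- Lemma 1: any feasible set of load bounds has total load at least the
minimal capacity requirement (C - L)/(D - L). -/
theorem stmt_3 (m : ℕ) (hm : 1 ≤ m) (δ : ℕ → ℝ)
    (hpos : ∀ x, 1 ≤ x → x ≤ m → 0 < δ x)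
    (hmono : ∀ x, 1 ≤ x → x < m → δ (x + 1) ≤ δ x)
    (hδ1 : δ 1 ≤ 1)
    (S : ℕ → ℝ) (hS : ∀ x, S x = ∑ j ∈ Finset.Icc 1 x, δ j)
    (lam : ℝ)
    (hlam : lam = (Finset.Icc 1 m).sup' (Finset.nonempty_Icc.mpr hm)
      (fun x => (S m - S x) / δ x))
    (C L D : ℝ) (hL : 0 ≤ L) (hLD : L < D)
    (hsched : (C + lam * L) / S m ≤ D) :
    (C - L) / (D - L) ≤ S m := by
  have hδ1pos : 0 < δ 1 := hpos 1 le_rfl hm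
  have hSm_pos : 0 < S m := by
    rw [hS]
    apply Finset.sum_pos
    · intro j hj
      rw [Finset.mem_Icc] at hj
      exact hpos j hj.1 hj.2
    · exact Finset.nonempty_Icc.mpr hm
  have hS1 : S 1 = δ 1 := by rw [hS]; simp
  have hdiff : 0 ≤ S m - S 1 := by
    rw [hS m, hS 1]
    have : Finset.Icc 1 1 ⊆ Finset.Icc 1 m := Finset.Icc_subset_Icc_right hm
    have := Finset.sum_le_sum_of_subset_of_nonneg this
      (fun j hj _ => (hpos j (Finset.mem_Icc.mp hj).1 (Finset.mem_Icc.mp hj).2).le)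
    linarith
  have hlam1 : (S m - S 1) / δ 1 ≤ lam := by
    rw [hlam]
    exact Finset.le_sup' (fun x => (S m - S x) / δ x) (Finset.mem_Icc.mpr ⟨le_rfl, hm⟩)
  have hlam_ge : S m - 1 ≤ lam := by
    have h1 : S m - S 1 ≤ (S m - S 1) / δ 1 := by
      rw [le_div_iff₀ hδ1pos]
      nlinarith
    have : S m - 1 ≤ S m - S 1 := by rw [hS1]; linarith
    linarith
  have hC : C + lam * L ≤ D * S m := (div_le_iff₀ hSm_pos).mp hsched
  have hkey : C - L ≤ S m * (D - L) := by nlinarith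
  rw [div_le_iff₀ (by linarith : (0:ℝ) < D - L)]
  linarith [hkey]
end

section
/- Let C, L, D be real numbers with 0 ≤ L < D < C, let γ = (C − L)/(D − L), and assume γ is not an integer. Consider the speed vector consisting of ⌊γ⌋ entries equal to 1 followed by one entry equal to γ − ⌊γ⌋, with partial sums S_j and uniformity λ = max_j (S_m − S_j)/δ_j. Then λ = γ − 1, S_m = γ, and (C + λ·L)/S_m ≤ D. -/
/-- Lemma 2: a heavy task with minimal capacity requirement γ (not an integer)
is schedulable on ⌊γ⌋ dedicated unit-speed processors plus one container task
with load bound γ - ⌊γ⌋; the resulting platform has uniformity γ - 1 and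
total speed γ. -/
theorem stmt_6 (C L D : ℝ) (hL : 0 ≤ L) (hLD : L < D) (hDC : D < C)
    (γ : ℝ) (hγ : γ = (C - L) / (D - L)) (hnint : ¬ ∃ n : ℤ, γ = (n : ℝ))
    (m : ℕ) (hm : m = ⌊γ⌋.toNat + 1)
    (speeds : ℕ → ℝ)
    (hspeeds : ∀ j, speeds j = if j ≤ ⌊γ⌋.toNat then 1 else γ - (⌊γ⌋ : ℝ))
    (S : ℕ → ℝ) (hS : ∀ y, S y = ∑ j ∈ Finset.Icc 1 y, speeds j)
    (lam : ℝ)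
    (hlam : lam = (Finset.Icc 1 m).sup'
      (Finset.nonempty_Icc.mpr (by omega))
      (fun j => (S m - S j) / speeds j)) :
    lam = γ - 1 ∧ S m = γ ∧ (C + lam * L) / S m ≤ D := by
  have hDL : (0:ℝ) < D - L := by linarith
  have hγ1 : 1 < γ := by
    rw [hγ, lt_div_iff₀ hDL]; linarith
  set n := ⌊γ⌋.toNat with hn
  have hfloor1 : (1:ℤ) ≤ ⌊γ⌋ := by
    apply Int.le_floor.mpr; exact_mod_cast hγ1.le
  have hn1 : 1 ≤ n := by omega
  have hncast : ((n:ℕ) : ℝ) = ((⌊γ⌋ : ℤ) : ℝ) := by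
    rw [hn]; exact_mod_cast congrArg (Int.cast : ℤ → ℝ) (Int.toNat_of_nonneg (by omega : (0:ℤ) ≤ ⌊γ⌋))
  have hfrac : ((⌊γ⌋:ℤ):ℝ) < γ := by
    rcases lt_or_eq_of_le (Int.floor_le γ) with h | h
    · exact h
    · exact absurd ⟨⌊γ⌋, h.symm⟩ hnint
  have hγn : (n:ℝ) < γ := by rw [hncast]; exact hfrac
  have hSval : ∀ y, y ≤ n → S y = (y:ℝ) := by
    intro y hy
    rw [hS, Finset.sum_congr rfl (fun j hj => by
      rw [hspeeds j, if_pos (le_trans (Finset.mem_Icc.mp hj).2 hy)])]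
    simp [Nat.card_Icc]
  have hSm : S m = γ := by
    rw [hS, hm, Finset.sum_Icc_succ_top (by omega : 1 ≤ n + 1)]
    have h1 : ∑ j ∈ Finset.Icc 1 n, speeds j = (n:ℝ) := by
      have := hSval n le_rfl; rw [hS] at this; exact this
    rw [h1, hspeeds (n+1), if_neg (by omega)]
    rw [← hncast]; ring
  have hlamval : lam = γ - 1 := by
    apply le_antisymm
    · rw [hlam]
      apply Finset.sup'_le
      intro j hj
      obtain ⟨hj1, hj2⟩ := Finset.mem_Icc.mp hj
      by_cases hcase : j ≤ n
      · rw [hSm, hSval j hcase, hspeeds j, if_pos hcase, div_one]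
        have : (1:ℝ) ≤ (j:ℝ) := by exact_mod_cast hj1
        linarith
      · have hjm : j = m := by omega
        rw [hjm, hSm, sub_self, zero_div]
        linarith
    · rw [hlam]
      have h1m : 1 ∈ Finset.Icc 1 m := Finset.mem_Icc.mpr ⟨le_rfl, by omega⟩
      calc γ - 1 = (S m - S 1) / speeds 1 := by
            rw [hSm, hSval 1 hn1, hspeeds 1, if_pos hn1, div_one]; norm_num
        _ ≤ _ := Finset.le_sup' (fun j => (S m - S j) / speeds j) h1m
  refine ⟨hlamval, hSm, ?_⟩
  rw [hlamval, hSm, div_le_iff₀ (by linarith : (0:ℝ) < γ)]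
  have hkey : γ * D - γ * L = C - L := by
    rw [hγ]; field_simp
  nlinarith [hkey]
end

section
/- Let x ≥ 1 be an integer and let δ', δ'' be real numbers with 1 ≥ δ' ≥ δ'' > 0. Consider the speed vector consisting of x entries equal to 1 followed by the entries δ' and δ'' (so m = x + 2 speeds in nonincreasing order). Then the uniformity λ = max_{1 ≤ j ≤ m} (S_m − S_j)/δ_j equals max(x + δ' + δ'' − 1, δ''/δ'). -/
/-!
The ratios `(S_m - S_j) / δ_j` are `x + δ' + δ'' - j` on the unit-speed block `j ≤ x`, where they
decrease in `j`, then `δ'' / δ'` at `j = x + 1` and `0` at `j = m = x + 2`. So the maximum is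
attained at `j = 1` or at `j = x + 1`, the last ratio being dominated by the first.
-/

section TwoContainers

variable {x : ℕ} {δ' δ'' : ℝ} {speeds S : ℕ → ℝ}
  (hspeeds : ∀ j, speeds j = if j ≤ x then 1 else if j = x + 1 then δ' else δ'')
  (hS : ∀ y, S y = ∑ j ∈ Finset.Icc 1 y, speeds j)
include hspeeds hS

lemma partialSum_of_le {j : ℕ} (hj : j ≤ x) : S j = j := by
  rw [hS, Finset.sum_congr rfl fun i hi => by rw [hspeeds, if_pos ((Finset.mem_Icc.1 hi).2.trans hj)]]
  simp

lemma partialSum_succ : S (x + 1) = x + δ' := by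
  rw [hS, Finset.sum_Icc_succ_top (by omega), ← hS, partialSum_of_le hspeeds hS le_rfl, hspeeds,
    if_neg (by omega), if_pos rfl]

lemma partialSum_add_two : S (x + 2) = x + δ' + δ'' := by
  rw [hS, Finset.sum_Icc_succ_top (by omega), ← hS, partialSum_succ hspeeds hS, hspeeds,
    if_neg (by omega), if_neg (by omega)]

lemma ratio_of_le {j : ℕ} (hj : j ≤ x) :
    (S (x + 2) - S j) / speeds j = x + δ' + δ'' - j := by
  rw [partialSum_add_two hspeeds hS, partialSum_of_le hspeeds hS hj, hspeeds, if_pos hj, div_one]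

lemma ratio_succ : (S (x + 2) - S (x + 1)) / speeds (x + 1) = δ'' / δ' := by
  rw [partialSum_add_two hspeeds hS, partialSum_succ hspeeds hS, hspeeds, if_neg (by omega),
    if_pos rfl, add_sub_cancel_left]

end TwoContainers

/-- For x unit-speed processors plus two processors of speeds
1 ≥ δ' ≥ δ'' > 0, the uniformity equals max (x + δ' + δ'' - 1) (δ''/δ'). -/
theorem stmt_7 (x : ℕ) (hx : 1 ≤ x) (δ' δ'' : ℝ)
    (h2 : δ'' ≤ δ') (h3 : 0 < δ'')
    (speeds : ℕ → ℝ)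
    (hspeeds : ∀ j, speeds j = if j ≤ x then 1 else if j = x + 1 then δ' else δ'')
    (S : ℕ → ℝ) (hS : ∀ y, S y = ∑ j ∈ Finset.Icc 1 y, speeds j)
    (lam : ℝ)
    (hlam : lam = (Finset.Icc 1 (x + 2)).sup'
      (Finset.nonempty_Icc.mpr (by omega))
      (fun j => (S (x + 2) - S j) / speeds j)) :
    lam = max ((x : ℝ) + δ' + δ'' - 1) (δ'' / δ') := by
  have hx' : (1 : ℝ) ≤ x := by exact_mod_cast hx
  have hlast_le_first : (0 : ℝ) ≤ x + δ' + δ'' - 1 := by linarith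
  subst hlam
  refine le_antisymm (Finset.sup'_le _ _ fun j hj => ?_) (max_le ?_ ?_)
  · obtain ⟨hj1, hj2⟩ := Finset.mem_Icc.1 hj
    obtain hjx | rfl | rfl : j ≤ x ∨ j = x + 1 ∨ j = x + 2 := by omega
    · rw [ratio_of_le hspeeds hS hjx]
      have : (1 : ℝ) ≤ j := by exact_mod_cast hj1
      exact le_max_of_le_left (by linarith)
    · exact (ratio_succ hspeeds hS).trans_le (le_max_right _ _)
    · rw [sub_self, zero_div]
      exact le_max_of_le_left hlast_le_first
  · exact Finset.le_sup'_of_le _ (Finset.mem_Icc.2 ⟨le_rfl, by omega⟩)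
      (by rw [ratio_of_le hspeeds hS hx, Nat.cast_one])
  · exact Finset.le_sup'_of_le _ (Finset.mem_Icc.2 ⟨by omega, by omega⟩)
      (ratio_succ hspeeds hS).ge
end

section
/- Let C, L, D be real numbers with 0 ≤ L < D < C, let γ = (C − L)/(D − L), and assume γ is not an integer. Let f = γ − ⌊γ⌋ and let δ', δ'' be real numbers with δ'' > 0, δ' + δ'' = f, and δ' ≥ max(f/2, f/γ). Consider the speed vector consisting of ⌊γ⌋ entries equal to 1 followed by the entries δ' and δ'', with partial sums S_j and uniformity λ = max_j (S_m − S_j)/δ_j. Then λ = γ − 1, S_m = γ, and (C + λ·L)/S_m ≤ D. -/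
/-- Lemma 3: a heavy task with minimal capacity requirement γ (not an integer)
remains schedulable on ⌊γ⌋ dedicated unit-speed processors plus two container
tasks with load bounds δ' and δ'' satisfying δ' + δ'' = γ - ⌊γ⌋ and
δ' ≥ max((γ - ⌊γ⌋)/2, (γ - ⌊γ⌋)/γ); the platform has uniformity γ - 1 and
total speed γ. -/
theorem stmt_9 (C L D : ℝ) (hL : 0 ≤ L) (hLD : L < D) (hDC : D < C)
    (γ : ℝ) (hγ : γ = (C - L) / (D - L)) (hnint : ¬ ∃ n : ℤ, γ = (n : ℝ))
    (f : ℝ) (hf : f = γ - (⌊γ⌋ : ℝ))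
    (δ' δ'' : ℝ) (h2 : 0 < δ'') (hsum : δ' + δ'' = f)
    (hδ' : max (f / 2) (f / γ) ≤ δ')
    (m : ℕ) (hm : m = ⌊γ⌋.toNat + 2)
    (speeds : ℕ → ℝ)
    (hspeeds : ∀ j, speeds j =
      if j ≤ ⌊γ⌋.toNat then 1 else if j = ⌊γ⌋.toNat + 1 then δ' else δ'')
    (S : ℕ → ℝ) (hS : ∀ y, S y = ∑ j ∈ Finset.Icc 1 y, speeds j)
    (lam : ℝ)
    (hlam : lam = (Finset.Icc 1 m).sup'
      (Finset.nonempty_Icc.mpr (by omega))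
      (fun j => (S m - S j) / speeds j)) :
    lam = γ - 1 ∧ S m = γ ∧ (C + lam * L) / S m ≤ D := by
  have hDL : 0 < D - L := by linarith
  have hγ1 : 1 < γ := by
    rw [hγ, lt_div_iff₀ hDL]; linarith
  have hγ0 : 0 < γ := by linarith
  have hfl1 : 1 ≤ ⌊γ⌋ := by
    exact_mod_cast Int.le_floor.mpr (by exact_mod_cast hγ1.le)
  set k := ⌊γ⌋.toNat with hk
  have hkfl : (k : ℝ) = (⌊γ⌋ : ℝ) := by
    exact_mod_cast Int.toNat_of_nonneg (by omega)
  have hk1 : 1 ≤ k := by omega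
  have hfpos : 0 < f := by
    rw [hf, Int.self_sub_floor]
    exact Int.fract_pos.mpr (fun h => hnint ⟨⌊γ⌋, h⟩)
  have hδ'pos : 0 < δ' :=
    lt_of_lt_of_le (by linarith) (le_trans (le_max_left _ _) hδ')
  -- partial sums up to indices ≤ k are just count
  have hSle : ∀ j, j ≤ k → S j = (j : ℝ) := by
    intro j hj
    rw [hS j]
    rw [Finset.sum_congr rfl (fun i hi => by
      rw [hspeeds i, if_pos (le_trans (Finset.mem_Icc.mp hi).2 hj)])]
    simp [Nat.card_Icc]
  have hSk : S k = (k : ℝ) := hSle k le_rfl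
  have hSk1 : S (k + 1) = (k : ℝ) + δ' := by
    rw [hS (k+1), Finset.sum_Icc_succ_top (by omega), ← hS k, hSk,
      hspeeds (k+1), if_neg (by omega), if_pos rfl]
  have hSm : S m = γ := by
    rw [hm, hS (k+2), Finset.sum_Icc_succ_top (by omega), ← hS (k+1), hSk1,
      hspeeds (k+2), if_neg (by omega), if_neg (by omega)]
    rw [hkfl]
    linarith [hf, hsum]
  -- key inequality for container task δ'
  have hkey : δ'' / δ' ≤ γ - 1 := by
    rw [div_le_iff₀ hδ'pos]
    have : f / γ ≤ δ' := le_trans (le_max_right _ _) hδ'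
    rw [div_le_iff₀ hγ0] at this
    nlinarith
  have hne : (Finset.Icc 1 m).Nonempty := Finset.nonempty_Icc.mpr (by omega)
  have hlameq : lam = γ - 1 := by
    rw [hlam]
    apply le_antisymm
    · apply Finset.sup'_le
      intro j hj
      obtain ⟨hj1, hj2⟩ := Finset.mem_Icc.mp hj
      rw [hm] at hj2
      rcases lt_or_ge j (k+1) with h | h
      · have hjk : j ≤ k := by omega
        rw [hSle j hjk, hspeeds j, if_pos hjk, hSm, div_one]
        have : (1 : ℝ) ≤ (j : ℝ) := by exact_mod_cast hj1
        linarith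
      · rcases eq_or_lt_of_le h with h' | h'
        · rw [← h', hSk1, hspeeds (k+1), if_neg (by omega), if_pos rfl, hSm]
          have : γ - ((k:ℝ) + δ') = δ'' := by rw [hkfl]; linarith [hf, hsum]
          rw [this]; exact hkey
        · have hjm : j = k + 2 := by omega
          rw [hjm, ← hm, sub_self, zero_div]
          linarith
    · have h1m : 1 ∈ Finset.Icc 1 m := Finset.mem_Icc.mpr ⟨le_rfl, by omega⟩
      have := Finset.le_sup' (fun j => (S m - S j) / speeds j) h1m
      refine le_trans (le_of_eq ?_) this
      rw [hSle 1 hk1, hspeeds 1, if_pos hk1, hSm, div_one]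
      norm_num
  refine ⟨hlameq, hSm, ?_⟩
  rw [hlameq, hSm, div_le_iff₀ hγ0]
  have hγeq : γ * (D - L) = C - L := by
    rw [hγ]; field_simp
  nlinarith
end

section
/- Let C, L, D be real numbers with 0 ≤ L < D < C and let γ = (C − L)/(D − L). Then γ equals the minimum of S_m over all m ≥ 1 and all speed vectors δ_1 ≥ δ_2 ≥ ... ≥ δ_m with 0 < δ_x ≤ 1 for all x that satisfy (C + λ·L)/S_m ≤ D, where S_m = δ_1 + ... + δ_m and λ = max_{1 ≤ x ≤ m} (S_m − S_x)/δ_x with S_x = δ_1 + ... + δ_x. That is: (i) every such feasible speed vector satisfies S_m ≥ γ, and (ii) if γ is not an integer, the speed vector consisting of ⌊γ⌋ entries equal to 1 followed by one entry equal to γ − ⌊γ⌋ is feasible and has S_m = γ. -/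
/-!
For the lower bound, the first term of the maximum defining λ already gives λ ≥ (S_m − δ_1)/δ_1
≥ S_m − 1 because δ_1 ≤ 1; then C + (S_m − 1)L ≤ D S_m rearranges to γ ≤ S_m. For the SF-1
vector every term of the maximum is at most γ − 1 (the unit speeds leave γ − x behind position x,
the last speed leaves nothing), so C + λL ≤ C + (γ − 1)L = γD.
-/

open Finset

def partialSpeed (δ : ℕ → ℝ) (x : ℕ) : ℝ := ∑ j ∈ Icc 1 x, δ j

noncomputable def speedUniformity (m : ℕ) (hm : 1 ≤ m) (δ : ℕ → ℝ) : ℝ :=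
  (Icc 1 m).sup' (nonempty_Icc.mpr hm) fun x => (partialSpeed δ m - partialSpeed δ x) / δ x

section Bounds

variable {C L D γ : ℝ}

lemma le_of_response_le {S u : ℝ} (hL : 0 ≤ L) (hLD : L < D) (hγ : γ = (C - L) / (D - L))
    (hS : 0 < S) (hu : S - 1 ≤ u) (h : (C + u * L) / S ≤ D) : γ ≤ S := by
  rw [div_le_iff₀ hS] at h
  rw [hγ, div_le_iff₀ (sub_pos.mpr hLD)]
  nlinarith [mul_le_mul_of_nonneg_right hu hL]

lemma response_le_of_le_sub_one {u : ℝ} (hL : 0 ≤ L) (hLD : L < D)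
    (hγ : γ = (C - L) / (D - L)) (hγ₀ : 0 < γ) (hu : u ≤ γ - 1) : (C + u * L) / γ ≤ D := by
  have hγD : γ * (D - L) = C - L := by rw [hγ]; exact div_mul_cancel₀ _ (sub_pos.mpr hLD).ne'
  rw [div_le_iff₀ hγ₀]
  nlinarith [mul_le_mul_of_nonneg_right hu hL]

end Bounds

section Uniformity

variable {m : ℕ} {δ : ℕ → ℝ}

lemma partialSpeed_pos (hm : 1 ≤ m) (hpos : ∀ x, 1 ≤ x → x ≤ m → 0 < δ x) :
    0 < partialSpeed δ m :=
  sum_pos (fun x hx => hpos x (mem_Icc.mp hx).1 (mem_Icc.mp hx).2) ⟨1, mem_Icc.mpr ⟨le_rfl, hm⟩⟩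

lemma partialSpeed_sub_one_le_speedUniformity (hm : 1 ≤ m) (hpos : ∀ x, 1 ≤ x → x ≤ m → 0 < δ x)
    (hδ₁ : δ 1 ≤ 1) : partialSpeed δ m - 1 ≤ speedUniformity m hm δ := by
  have hrest : δ 1 ≤ partialSpeed δ m :=
    single_le_sum (fun x hx => (hpos x (mem_Icc.mp hx).1 (mem_Icc.mp hx).2).le)
      (mem_Icc.mpr ⟨le_rfl, hm⟩)
  calc partialSpeed δ m - 1
      ≤ partialSpeed δ m - δ 1 := by linarith
    _ ≤ (partialSpeed δ m - δ 1) / δ 1 :=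
        le_div_self (by linarith) (hpos 1 le_rfl hm) hδ₁
    _ = (partialSpeed δ m - partialSpeed δ 1) / δ 1 := by simp [partialSpeed]
    _ ≤ speedUniformity m hm δ := le_sup' (fun x => (partialSpeed δ m - partialSpeed δ x) / δ x)
        (mem_Icc.mpr ⟨le_rfl, hm⟩)

end Uniformity

section SemiFederated

def semiFederatedSpeeds (k : ℕ) (f : ℝ) (j : ℕ) : ℝ := if j ≤ k then 1 else f

variable {k : ℕ} {f : ℝ}

lemma partialSpeed_semiFederatedSpeeds_of_le {x : ℕ} (hx : x ≤ k) :
    partialSpeed (semiFederatedSpeeds k f) x = x := by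
  rw [partialSpeed, sum_congr rfl fun j hj =>
    show semiFederatedSpeeds k f j = 1 from if_pos ((mem_Icc.mp hj).2.trans hx)]
  simp

lemma partialSpeed_semiFederatedSpeeds_succ :
    partialSpeed (semiFederatedSpeeds k f) (k + 1) = k + f := by
  rw [partialSpeed, sum_Icc_succ_top (by omega), ← partialSpeed,
    partialSpeed_semiFederatedSpeeds_of_le le_rfl, semiFederatedSpeeds, if_neg (by omega)]

lemma semiFederatedSpeeds_pos (hf : 0 < f) (j : ℕ) : 0 < semiFederatedSpeeds k f j := by
  unfold semiFederatedSpeeds; split_ifs <;> linarith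

lemma semiFederatedSpeeds_le_one (hf : f ≤ 1) (j : ℕ) : semiFederatedSpeeds k f j ≤ 1 := by
  unfold semiFederatedSpeeds; split_ifs <;> linarith

lemma semiFederatedSpeeds_succ_le (hf : f ≤ 1) (j : ℕ) :
    semiFederatedSpeeds k f (j + 1) ≤ semiFederatedSpeeds k f j := by
  unfold semiFederatedSpeeds; split_ifs <;> first | omega | linarith

lemma speedUniformity_semiFederatedSpeeds_le (h : 1 ≤ (k : ℝ) + f) :
    speedUniformity (k + 1) (by omega) (semiFederatedSpeeds k f) ≤ k + f - 1 := by
  refine sup'_le _ _ fun x hx => ?_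
  obtain ⟨hx₁, hxk⟩ := mem_Icc.mp hx
  rw [partialSpeed_semiFederatedSpeeds_succ]
  rcases Nat.lt_or_ge k x with hlt | hle
  · obtain rfl : x = k + 1 := by omega
    simpa [partialSpeed_semiFederatedSpeeds_succ] using h
  · have : (1 : ℝ) ≤ x := by exact_mod_cast hx₁
    rw [partialSpeed_semiFederatedSpeeds_of_le hle, semiFederatedSpeeds, if_pos hle, div_one]
    linarith

end SemiFederated

/-- Combination of Lemmas 1 and 2: γ = (C - L)/(D - L) is the minimum total
processing capacity over all feasible speed vectors (speeds in (0,1],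
nonincreasing) satisfying the schedulability condition (C + λL)/S_m ≤ D.
(i) Every feasible speed vector has total speed at least γ.
(ii) If γ is not an integer, the vector of ⌊γ⌋ unit speeds followed by one
speed γ - ⌊γ⌋ is feasible and has total speed exactly γ. -/
theorem stmt_11 (C L D : ℝ) (hL : 0 ≤ L) (hLD : L < D) (hDC : D < C)
    (γ : ℝ) (hγ : γ = (C - L) / (D - L)) :
    (∀ (m : ℕ) (hm : 1 ≤ m) (δ : ℕ → ℝ),
      (∀ x, 1 ≤ x → x ≤ m → 0 < δ x) →
      (∀ x, 1 ≤ x → x ≤ m → δ x ≤ 1) →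
      (∀ x, 1 ≤ x → x < m → δ (x + 1) ≤ δ x) →
      (C + ((Finset.Icc 1 m).sup' (Finset.nonempty_Icc.mpr hm)
          (fun x => ((∑ j ∈ Finset.Icc 1 m, δ j) - ∑ j ∈ Finset.Icc 1 x, δ j) / δ x)) * L)
          / (∑ j ∈ Finset.Icc 1 m, δ j) ≤ D →
      γ ≤ ∑ j ∈ Finset.Icc 1 m, δ j)
    ∧ ((¬ ∃ n : ℤ, γ = (n : ℝ)) →
      ∃ (m : ℕ) (hm : 1 ≤ m) (δ : ℕ → ℝ),
        m = ⌊γ⌋.toNat + 1 ∧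
        (∀ j, δ j = if j ≤ ⌊γ⌋.toNat then 1 else γ - (⌊γ⌋ : ℝ)) ∧
        (∀ x, 1 ≤ x → x ≤ m → 0 < δ x) ∧
        (∀ x, 1 ≤ x → x ≤ m → δ x ≤ 1) ∧
        (∀ x, 1 ≤ x → x < m → δ (x + 1) ≤ δ x) ∧
        (C + ((Finset.Icc 1 m).sup' (Finset.nonempty_Icc.mpr hm)
            (fun x => ((∑ j ∈ Finset.Icc 1 m, δ j) - ∑ j ∈ Finset.Icc 1 x, δ j) / δ x)) * L)
            / (∑ j ∈ Finset.Icc 1 m, δ j) ≤ D ∧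
        (∑ j ∈ Finset.Icc 1 m, δ j) = γ) := by
  refine ⟨fun m hm δ hpos hle _ hsched => le_of_response_le hL hLD hγ (partialSpeed_pos hm hpos)
    (partialSpeed_sub_one_le_speedUniformity hm hpos (hle 1 le_rfl hm)) hsched, fun hnint => ?_⟩
  have hγ₁ : 1 < γ := by rw [hγ, one_lt_div (by linarith)]; linarith
  have hfract_pos : 0 < γ - ⌊γ⌋ := Int.self_sub_floor γ ▸ Int.fract_pos.mpr fun h => hnint ⟨_, h⟩
  have hfract_le : γ - ⌊γ⌋ ≤ 1 := (Int.self_sub_floor γ ▸ Int.fract_lt_one γ).le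
  have hk : (⌊γ⌋.toNat : ℝ) + (γ - ⌊γ⌋) = γ := by
    rw [Int.floor_toNat, ← Int.cast_natCast, Int.natCast_floor_eq_floor (by linarith)]; ring
  set k := ⌊γ⌋.toNat
  set δ := semiFederatedSpeeds k (γ - ⌊γ⌋)
  have hsum : partialSpeed δ (k + 1) = γ := partialSpeed_semiFederatedSpeeds_succ.trans hk
  have hu : speedUniformity (k + 1) (by omega) δ ≤ γ - 1 := by
    have := speedUniformity_semiFederatedSpeeds_le (k := k) (f := γ - ⌊γ⌋) (by linarith)
    rwa [hk] at this
  refine ⟨k + 1, by omega, δ, rfl, fun _ => rfl,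
    fun x _ _ => semiFederatedSpeeds_pos hfract_pos x,
    fun x _ _ => semiFederatedSpeeds_le_one hfract_le x,
    fun x _ _ => semiFederatedSpeeds_succ_le hfract_le x, ?_, hsum⟩
  change (C + speedUniformity (k + 1) (by omega) δ * L) / partialSpeed δ (k + 1) ≤ D
  rw [hsum]
  exact response_le_of_le_sub_one hL hLD hγ (by linarith) hu
end
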